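/- arXiv:1611.07474 — 3 statements merged into one kernel-verified Lean document; each statement's English description precedes it below -/
import Mathlib

section
/- There is a unique way to assign to each matroid M a polynomial P_M(t) with integer coefficients such that: (1) if rk M = 0 then P_M(t) = 1; (2) if rk M > 0 then deg P_M(t) < (rk M)/2; (3) for every M, t^{rk M} P_M(1/t) = \sum_F \chi_{M_F}(t) P_{M^F}(t), where the sum is over all flats F of M. -/
open Polynomial Finset

/-- A "pre-matroid": a finite ground set together with a rank function.
It is a matroid when `IsMatroid` holds. -/
structure PreMatroid (α : Type*) where
  E : Finset α
  r : Finset α → ℕ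

namespace PreMatroid

variable {α : Type*} [DecidableEq α]

/-- The rank axioms for a rank function on the ground set `E`, extended to all finite
sets by `r A = r (A ∩ E)`. -/
def IsMatroid (M : PreMatroid α) : Prop :=
  M.r ∅ = 0 ∧ (∀ A, M.r A ≤ A.card) ∧ (∀ A B, A ⊆ B → M.r A ≤ M.r B) ∧
    (∀ A B, M.r (A ∪ B) + M.r (A ∩ B) ≤ M.r A + M.r B) ∧ (∀ A, M.r (A ∩ M.E) = M.r A)

/-- The rank of a matroid. -/
def rk (M : PreMatroid α) : ℕ := M.r M.E

/-- The flats of a matroid: subsets of the ground set such that adding any new element of the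
ground set increases the rank. -/
def flats (M : PreMatroid α) : Finset (Finset α) :=
  M.E.powerset.filter fun F => ∀ e ∈ M.E, e ∉ F → M.r F < M.r (insert e F)

theorem subset_of_mem_flats {M : PreMatroid α} {F : Finset α} (hF : F ∈ M.flats) : F ⊆ M.E :=
  mem_powerset.mp (mem_filter.mp hF).1

/-- The Möbius function `μ(∅̂, F)` of the lattice of flats, where `∅̂` is the minimal flat:
`μ = 1` on the minimal flat, and on any other flat `F` it is minus the sum of the values of `μ`
on all flats strictly contained in `F`. -/
def mu (M : PreMatroid α) (F : Finset α) : ℤ :=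
  if (M.flats.filter fun G => G ⊂ F).Nonempty then
    -∑ G ∈ (M.flats.filter fun G => G ⊂ F).attach, M.mu G.1
  else 1
termination_by F.card
decreasing_by exact Finset.card_lt_card (Finset.mem_filter.mp G.2).2

/-- The characteristic polynomial `χ_M(t) = ∑_{F ∈ L(M)} μ(∅̂,F) t^{rk M - rk F}`. -/
noncomputable def charPoly (M : PreMatroid α) : Polynomial ℤ :=
  ∑ F ∈ M.flats, Polynomial.C (M.mu F) * Polynomial.X ^ (M.rk - M.r F)

/-- The localization `M_F`: the restriction of `M` to the flat `F`. -/
def loc (M : PreMatroid α) (F : Finset α) : PreMatroid α :=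
  ⟨F, fun A => M.r (A ∩ F)⟩

/-- The contraction (restriction) `M^F` of `M` at the flat `F`, with ground set `E ∖ F` and
rank function `A ↦ r (A ∪ F) - r F`. -/
def con (M : PreMatroid α) (F : Finset α) : PreMatroid α :=
  ⟨M.E \ F, fun A => M.r ((A ∩ (M.E \ F)) ∪ F) - M.r F⟩

theorem IsMatroid.con {M : PreMatroid α} (h : M.IsMatroid) {F : Finset α} (hF : F ⊆ M.E) :
    (M.con F).IsMatroid := by
  obtain ⟨h0, hle, hmono, hsub, hcomp⟩ := h
  refine ⟨?_, ?_, ?_, ?_, ?_⟩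
  · show M.r ((∅ ∩ (M.E \ F)) ∪ F) - M.r F = 0
    simp
  · intro A
    show M.r ((A ∩ (M.E \ F)) ∪ F) - M.r F ≤ A.card
    have h1 := hsub (A ∩ (M.E \ F)) F
    have h2 := hle (A ∩ (M.E \ F))
    have h3 : (A ∩ (M.E \ F)).card ≤ A.card := card_le_card inter_subset_left
    omega
  · intro A B hAB
    show M.r ((A ∩ (M.E \ F)) ∪ F) - M.r F ≤ M.r ((B ∩ (M.E \ F)) ∪ F) - M.r F
    have : (A ∩ (M.E \ F)) ∪ F ⊆ (B ∩ (M.E \ F)) ∪ F :=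
      union_subset_union (inter_subset_inter hAB (Finset.Subset.refl _)) (Finset.Subset.refl _)
    exact Nat.sub_le_sub_right (hmono _ _ this) _
  · intro A B
    set D := M.E \ F with hD
    show M.r (((A ∪ B) ∩ D) ∪ F) - M.r F + (M.r (((A ∩ B) ∩ D) ∪ F) - M.r F) ≤
      M.r ((A ∩ D) ∪ F) - M.r F + (M.r ((B ∩ D) ∪ F) - M.r F)
    have e1 : (A ∪ B) ∩ D ∪ F = ((A ∩ D) ∪ F) ∪ ((B ∩ D) ∪ F) := by
      ext x; simp; tauto
    have e2 : (A ∩ B) ∩ D ∪ F = ((A ∩ D) ∪ F) ∩ ((B ∩ D) ∪ F) := by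
      ext x; simp; tauto
    have key := hsub ((A ∩ D) ∪ F) ((B ∩ D) ∪ F)
    have m1 := hmono F ((A ∩ D) ∪ F) subset_union_right
    have m2 := hmono F ((B ∩ D) ∪ F) subset_union_right
    have m3 := hmono F ((A ∪ B) ∩ D ∪ F) subset_union_right
    have m4 := hmono F ((A ∩ B) ∩ D ∪ F) subset_union_right
    rw [← e1, ← e2] at key
    omega
  · intro A
    show M.r ((A ∩ (M.E \ F) ∩ (M.E \ F)) ∪ F) - M.r F = M.r ((A ∩ (M.E \ F)) ∪ F) - M.r F
    rw [inter_assoc, inter_self]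

end PreMatroid

/-- The type of assignments, to each matroid (on any ground type), of a polynomial. -/
def KLfun : Type 1 := ∀ (α : Type) [DecidableEq α] (M : PreMatroid α), M.IsMatroid → Polynomial ℤ

/-- The defining conditions of the Kazhdan-Lusztig polynomial of a matroid:
`P_M = 1` in rank zero, `deg P_M < (rk M)/2` in positive rank, and the defining recursion
`t^{rk M} P_M(1/t) = ∑_{F ∈ L(M)} χ_{M_F}(t) P_{M^F}(t)`. -/
def KLconds (P : KLfun) : Prop :=
  ∀ (α : Type) [DecidableEq α] (M : PreMatroid α) (h : M.IsMatroid),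
    (M.rk = 0 → P α M h = 1) ∧
    (0 < M.rk → 2 * (P α M h).natDegree < M.rk) ∧
    ((P α M h).reflect M.rk =
      ∑ F ∈ M.flats.attach, (M.loc F.1).charPoly *
        P α (M.con F.1) (h.con (PreMatroid.subset_of_mem_flats F.2)))

/-!
Every contraction `M^F` by a nonempty flat has a smaller ground set, so both halves go by
induction on its size. If `M` has loops, every flat is nonempty and the recursion determines
`t^{rk M} P_M(1/t)`, hence `P_M`, from smaller matroids; contracting the loops changes neither the
lattice of flats nor the characteristic polynomials, so `P_M := P_{M^{loops}}` satisfies it. If `M`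
is loopless, the term `F = ∅` is `P_M` itself and the recursion reads
`t^{rk M} P_M(1/t) - P_M(t) = Q(t)`, `Q` the sum over the nonempty flats. Under the degree bound
this has at most one solution, and it has one (the terms of `-Q` of degree `< rk M / 2`) as soon as
`t^{rk M} Q(1/t) = -Q(t)`. That antisymmetry follows from the recursion for the contractions
together with `∑_F t^{rk F} χ_{M_F}(1/t) χ_{M^F}(t) = 0` for `rk M > 0`, which expands to the
identity `ζ * μ = 1` in the incidence algebra of the lattice of flats, a consequence of the
defining identity `μ * ζ = 1`.
-/

namespace Polynomial

variable {R : Type*}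

theorem eq_zero_of_reflect_eq_self [Semiring R] {d : ℕ} {p : R[X]} (hdeg : 2 * p.natDegree < d)
    (hp : p.reflect d = p) : p = 0 := by
  ext k
  rw [coeff_zero]
  by_cases hk : p.natDegree < k
  · exact coeff_eq_zero_of_natDegree_lt hk
  · rw [← hp, coeff_reflect, revAt_le (by omega)]
    exact coeff_eq_zero_of_natDegree_lt (by omega)

theorem reflect_sum [Semiring R] {ι : Type*} (s : Finset ι) (f : ι → R[X]) (N : ℕ) :
    reflect N (∑ i ∈ s, f i) = ∑ i ∈ s, reflect N (f i) :=
  map_sum (⟨⟨reflect N, reflect_zero⟩, fun p q => reflect_add p q N⟩ : R[X] →+ R[X]) f s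

noncomputable def lowerHalf [Semiring R] (d : ℕ) (p : R[X]) : R[X] :=
  ∑ k ∈ range d with 2 * k < d, monomial k (p.coeff k)

theorem coeff_lowerHalf [Semiring R] (d : ℕ) (p : R[X]) (i : ℕ) :
    (lowerHalf d p).coeff i = if 2 * i < d then p.coeff i else 0 := by
  simp only [lowerHalf, finsetSum_coeff, coeff_monomial, sum_ite_eq', mem_filter, mem_range]
  exact if_congr (by omega) rfl rfl

theorem two_mul_natDegree_lowerHalf_lt [Semiring R] {d : ℕ} (hd : 0 < d) (p : R[X]) :
    2 * (lowerHalf d p).natDegree < d := by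
  have : (lowerHalf d p).natDegree ≤ (d - 1) / 2 :=
    natDegree_le_iff_coeff_eq_zero.mpr fun i hi => by rw [coeff_lowerHalf, if_neg (by omega)]
  omega

theorem reflect_neg_lowerHalf [Ring R] [IsAddTorsionFree R] {d : ℕ} {p : R[X]}
    (hdeg : p.natDegree ≤ d) (hanti : p.reflect d = -p) :
    (-lowerHalf d p).reflect d = -lowerHalf d p + p := by
  ext i
  rw [reflect_neg, coeff_neg, coeff_reflect, coeff_add, coeff_neg, coeff_lowerHalf]
  by_cases hi : i ≤ d
  · have hsym := congrArg (coeff · i) hanti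
    simp only [coeff_reflect, revAt_le hi, coeff_neg] at hsym
    rw [revAt_le hi, coeff_lowerHalf]
    by_cases h1 : 2 * i < d
    · rw [if_neg (by omega), if_pos h1]
      abel
    by_cases h2 : 2 * i = d
    · rw [if_neg (by omega), if_neg h1]
      rw [show d - i = i by omega] at hsym
      have : 2 • p.coeff i = 0 := by
        rw [two_nsmul]
        nth_rewrite 1 [hsym]
        exact neg_add_cancel _
      simp [two_nsmul_eq_zero.mp this]
    · rw [if_pos (by omega), if_neg h1, hsym]
      abel
  · rw [revAt_eq_self_of_lt (by omega), coeff_lowerHalf, if_neg (by omega),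
      coeff_eq_zero_of_natDegree_lt (by omega)]
    simp

end Polynomial

namespace PreMatroid

open Matrix

variable {α : Type*} [DecidableEq α] {M : PreMatroid α}

/-! ### Rank, flats and loops -/

theorem r_empty (hM : M.IsMatroid) : M.r ∅ = 0 := hM.1

theorem r_mono (hM : M.IsMatroid) {A B : Finset α} (h : A ⊆ B) : M.r A ≤ M.r B := hM.2.2.1 A B h

theorem r_submod (hM : M.IsMatroid) (A B : Finset α) :
    M.r (A ∪ B) + M.r (A ∩ B) ≤ M.r A + M.r B := hM.2.2.2.1 A B

theorem r_inter_ground (hM : M.IsMatroid) (A : Finset α) : M.r (A ∩ M.E) = M.r A := hM.2.2.2.2 A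

theorem r_le_rk (hM : M.IsMatroid) {A : Finset α} (h : A ⊆ M.E) : M.r A ≤ M.rk := r_mono hM h

theorem r_insert_le (hM : M.IsMatroid) (A : Finset α) (e : α) :
    M.r (insert e A) ≤ M.r A + M.r {e} := by
  have h := r_submod hM {e} A
  rw [← insert_eq] at h
  omega

theorem mem_flats_iff {F : Finset α} :
    F ∈ M.flats ↔ F ⊆ M.E ∧ ∀ e ∈ M.E, e ∉ F → M.r F < M.r (insert e F) := by
  rw [flats, mem_filter, mem_powerset]

theorem ground_mem_flats : M.E ∈ M.flats :=
  mem_flats_iff.mpr ⟨Subset.rfl, fun _ he hne => absurd he hne⟩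

def loops (M : PreMatroid α) : Finset α := M.E.filter fun e => M.r {e} = 0

theorem r_eq_zero_of_forall_r_singleton (hM : M.IsMatroid) {A : Finset α}
    (h : ∀ e ∈ A, M.r {e} = 0) : M.r A = 0 := by
  induction A using Finset.induction_on with
  | empty => exact r_empty hM
  | insert a A _ ih =>
    have := r_insert_le hM A a
    have := h a (mem_insert_self a A)
    have := ih fun e he => h e (mem_insert_of_mem he)
    omega

theorem r_loops (hM : M.IsMatroid) : M.r M.loops = 0 :=
  r_eq_zero_of_forall_r_singleton hM fun _ he => (mem_filter.mp he).2

theorem loops_subset_of_mem_flats (hM : M.IsMatroid) {F : Finset α} (hF : F ∈ M.flats) :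
    M.loops ⊆ F := by
  intro e he
  obtain ⟨heE, he0⟩ := mem_filter.mp he
  by_contra heF
  have := (mem_flats_iff.mp hF).2 e heE heF
  have := r_insert_le hM F e
  omega

theorem subset_loops_of_r_eq_zero (hM : M.IsMatroid) {A : Finset α} (hA : A ⊆ M.E)
    (h : M.r A = 0) : A ⊆ M.loops := fun e he =>
  mem_filter.mpr ⟨hA he, by have := r_mono hM (singleton_subset_iff.mpr he); omega⟩

theorem eq_empty_of_r_eq_zero (hM : M.IsMatroid) (hl : M.loops = ∅) {A : Finset α}
    (hA : A ⊆ M.E) (h : M.r A = 0) : A = ∅ :=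
  subset_empty.mp (hl ▸ subset_loops_of_r_eq_zero hM hA h)

theorem loops_mem_flats (hM : M.IsMatroid) : M.loops ∈ M.flats := by
  refine mem_flats_iff.mpr ⟨filter_subset _ _, fun e he heL => ?_⟩
  have : M.r {e} ≠ 0 := fun h => heL (mem_filter.mpr ⟨he, h⟩)
  have := r_mono hM (singleton_subset_iff.mpr (mem_insert_self e M.loops))
  rw [r_loops hM]
  omega

theorem subset_of_r_eq_zero (hM : M.IsMatroid) {L F : Finset α} (hL : L ⊆ M.E) (hL0 : M.r L = 0)
    (hF : F ∈ M.flats) : L ⊆ F :=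
  (subset_loops_of_r_eq_zero hM hL hL0).trans (loops_subset_of_mem_flats hM hF)

/-! ### Localization and contraction -/

theorem loc_r_of_subset {F A : Finset α} (h : A ⊆ F) : (M.loc F).r A = M.r A := by
  show M.r (A ∩ F) = M.r A
  rw [inter_eq_left.mpr h]

theorem rk_loc (F : Finset α) : (M.loc F).rk = M.r F := loc_r_of_subset Subset.rfl

theorem IsMatroid.loc (hM : M.IsMatroid) (F : Finset α) : (M.loc F).IsMatroid := by
  refine ⟨?_, fun A => ?_, fun A B hAB => ?_, fun A B => ?_, fun A => ?_⟩
  · simpa [PreMatroid.loc] using r_empty hM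
  · exact (hM.2.1 _).trans (card_le_card inter_subset_left)
  · exact r_mono hM (inter_subset_inter hAB Subset.rfl)
  · show M.r ((A ∪ B) ∩ F) + M.r (A ∩ B ∩ F) ≤ M.r (A ∩ F) + M.r (B ∩ F)
    rw [union_inter_distrib_right, inter_inter_distrib_right]
    exact r_submod hM (A ∩ F) (B ∩ F)
  · simp only [PreMatroid.loc, inter_assoc, inter_self]

theorem flats_loc (hM : M.IsMatroid) {F : Finset α} (hF : F ∈ M.flats) :
    (M.loc F).flats = M.flats.filter (· ⊆ F) := by
  ext G
  rw [mem_filter, mem_flats_iff, mem_flats_iff]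
  simp only [PreMatroid.loc]
  constructor
  · rintro ⟨hGF, hG⟩
    refine ⟨⟨hGF.trans (subset_of_mem_flats hF), fun e he heG => ?_⟩, hGF⟩
    by_cases heF : e ∈ F
    · simpa [inter_eq_left.mpr hGF, inter_eq_left.mpr (insert_subset heF hGF)] using hG e heF heG
    · -- submodularity for `F` and `insert e G` pushes `r F < r (insert e F)` down to `G`
      have hs := r_submod hM F (insert e G)
      rw [union_insert, union_eq_left.mpr hGF, inter_insert_of_notMem heF,
        inter_eq_right.mpr hGF] at hs
      have := (mem_flats_iff.mp hF).2 e he heF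
      omega
  · rintro ⟨⟨-, hG⟩, hGF⟩
    refine ⟨hGF, fun e heF heG => ?_⟩
    rw [inter_eq_left.mpr hGF, inter_eq_left.mpr (insert_subset heF hGF)]
    exact hG e (subset_of_mem_flats hF heF) heG

theorem loc_loc {F H : Finset α} (hFH : F ⊆ H) : (M.loc H).loc F = M.loc F := by
  simp only [PreMatroid.loc, inter_assoc, inter_eq_left.mpr hFH]

theorem con_r_of_subset {F A : Finset α} (hA : A ⊆ M.E \ F) :
    (M.con F).r A = M.r (A ∪ F) - M.r F := by
  show M.r (A ∩ (M.E \ F) ∪ F) - M.r F = _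
  rw [inter_eq_left.mpr hA]

theorem con_r_sdiff {F H : Finset α} (hH : H ⊆ M.E) (hFH : F ⊆ H) :
    (M.con F).r (H \ F) = M.r H - M.r F := by
  rw [con_r_of_subset (sdiff_subset_sdiff hH Subset.rfl), sdiff_union_of_subset hFH]

theorem rk_con {F : Finset α} (hF : F ⊆ M.E) : (M.con F).rk = M.rk - M.r F :=
  con_r_sdiff Subset.rfl hF

theorem card_con_lt {F : Finset α} (hF : F ⊆ M.E) (hne : F.Nonempty) :
    (M.con F).E.card < M.E.card :=
  card_lt_card (sdiff_ssubset hF hne)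

theorem con_empty (hM : M.IsMatroid) : M.con ∅ = M := by
  obtain ⟨E, r⟩ := M
  simp only [PreMatroid.con, sdiff_empty, union_empty, mk.injEq, true_and]
  funext A
  rw [show r ∅ = 0 from r_empty hM, Nat.sub_zero]
  exact r_inter_ground hM A

theorem mem_flats_con_iff (hM : M.IsMatroid) {F Y : Finset α} (hF : F ⊆ M.E) :
    Y ∈ (M.con F).flats ↔ Y ⊆ M.E \ F ∧ Y ∪ F ∈ M.flats := by
  rw [mem_flats_iff, mem_flats_iff]
  simp only [PreMatroid.con]
  refine and_congr_right fun hY => ?_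
  have hYF : Y ∪ F ⊆ M.E := union_subset (hY.trans sdiff_subset) hF
  have hr (e : α) (he : e ∈ M.E \ F) :
      (M.con F).r Y < (M.con F).r (insert e Y) ↔ M.r (Y ∪ F) < M.r (insert e (Y ∪ F)) := by
    rw [con_r_of_subset hY, con_r_of_subset (insert_subset he hY), insert_union]
    have := r_mono hM (subset_union_right (s₁ := Y) (s₂ := F))
    omega
  constructor
  · intro h
    refine ⟨hYF, fun e he heYF => ?_⟩
    have heF : e ∈ M.E \ F := mem_sdiff.mpr ⟨he, fun h => heYF (mem_union_right _ h)⟩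
    exact (hr e heF).mp (h e heF fun h => heYF (mem_union_left _ h))
  · rintro ⟨-, h⟩ e he heY
    exact (hr e he).mpr (h e (mem_sdiff.mp he).1 (by simp [heY, (mem_sdiff.mp he).2]))

theorem flats_con (hM : M.IsMatroid) {F : Finset α} (hF : F ∈ M.flats) :
    (M.con F).flats = (M.flats.filter (F ⊆ ·)).image (· \ F) := by
  ext Y
  rw [mem_flats_con_iff hM (subset_of_mem_flats hF), mem_image]
  constructor
  · rintro ⟨hY, hYF⟩
    refine ⟨Y ∪ F, mem_filter.mpr ⟨hYF, subset_union_right⟩, ?_⟩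
    rw [union_sdiff_right, sdiff_eq_self_of_disjoint]
    exact disjoint_left.mpr fun a ha => (mem_sdiff.mp (hY ha)).2
  · rintro ⟨H, hH, rfl⟩
    obtain ⟨hH, hFH⟩ := mem_filter.mp hH
    exact ⟨sdiff_subset_sdiff (subset_of_mem_flats hH) Subset.rfl,
      by rwa [sdiff_union_of_subset hFH]⟩

theorem sdiff_mem_flats_con (hM : M.IsMatroid) {F H : Finset α} (hH : H ∈ M.flats)
    (hFH : F ⊆ H) : H \ F ∈ (M.con F).flats := by
  rw [mem_flats_con_iff hM (hFH.trans (subset_of_mem_flats hH)), sdiff_union_of_subset hFH]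
  exact ⟨sdiff_subset_sdiff (subset_of_mem_flats hH) Subset.rfl, hH⟩

theorem sum_flats_con {β : Type*} [AddCommMonoid β] (hM : M.IsMatroid) {F : Finset α}
    (hF : F ∈ M.flats) (g : Finset α → β) :
    ∑ Y ∈ (M.con F).flats, g Y = ∑ H ∈ M.flats with F ⊆ H, g (H \ F) := by
  rw [flats_con hM hF, sum_image]
  intro H₁ h₁ H₂ h₂ he
  rw [← sdiff_union_of_subset (mem_filter.mp h₁).2, ← sdiff_union_of_subset (mem_filter.mp h₂).2]
  exact congrArg (· ∪ F) he

theorem con_con (hM : M.IsMatroid) {F H : Finset α} (hH : H ⊆ M.E) (hFH : F ⊆ H) :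
    (M.con F).con (H \ F) = M.con H := by
  have hr (B : Finset α) (hB : B ⊆ M.E \ H) :
      (M.con F).r (B ∪ H \ F) - (M.con F).r (H \ F) = M.r (B ∪ H) - M.r H := by
    have hBF : B ∪ H \ F ⊆ M.E \ F :=
      union_subset (hB.trans (sdiff_subset_sdiff Subset.rfl hFH)) (sdiff_subset_sdiff hH Subset.rfl)
    rw [con_r_of_subset hBF, con_r_sdiff hH hFH, union_assoc, sdiff_union_of_subset hFH]
    have := r_mono hM hFH
    have := r_mono hM (subset_union_right (s₁ := B) (s₂ := H))
    omega
  show PreMatroid.mk ((M.E \ F) \ (H \ F))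
      (fun A => (M.con F).r (A ∩ ((M.E \ F) \ (H \ F)) ∪ H \ F) - (M.con F).r (H \ F)) = _
  simp only [sdiff_sdiff_sdiff_cancel_right hFH]
  exact congrArg _ (funext fun A => hr _ inter_subset_right)

theorem loc_con {F H : Finset α} (hH : H ⊆ M.E) (hFH : F ⊆ H) :
    (M.con F).loc (H \ F) = (M.loc H).con F := by
  show PreMatroid.mk (H \ F) (fun A => (M.con F).r (A ∩ (H \ F))) =
    PreMatroid.mk (H \ F) (fun A => (M.loc H).r (A ∩ (H \ F) ∪ F) - (M.loc H).r F)
  refine congrArg _ (funext fun A => ?_)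
  rw [con_r_of_subset (inter_subset_right.trans (sdiff_subset_sdiff hH Subset.rfl)),
    loc_r_of_subset (union_subset (inter_subset_right.trans sdiff_subset) hFH),
    loc_r_of_subset hFH]

/-! ### The Möbius function of the lattice of flats -/

theorem mu_eq (M : PreMatroid α) (F : Finset α) :
    M.mu F = if (M.flats.filter (· ⊂ F)).Nonempty then -∑ G ∈ M.flats with G ⊂ F, M.mu G
      else 1 := by
  rw [mu, sum_attach]

theorem sum_mu_subset (M : PreMatroid α) {X : Finset α} (hX : X ∈ M.flats) :
    ∑ G ∈ M.flats with G ⊆ X, M.mu G = if (M.flats.filter (· ⊂ X)).Nonempty then 0 else 1 := by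
  have hsplit : M.flats.filter (· ⊆ X) = insert X (M.flats.filter (· ⊂ X)) := by
    ext G
    simp only [mem_filter, mem_insert, subset_iff_ssubset_or_eq]
    constructor
    · rintro ⟨hG, h | rfl⟩ <;> tauto
    · rintro (rfl | ⟨hG, h⟩) <;> tauto
  rw [hsplit, sum_insert (by simp), mu_eq]
  split_ifs with h
  · simp
  · simp [not_nonempty_iff_eq_empty.mp h]

theorem mu_loc (hM : M.IsMatroid) {F G : Finset α} (hF : F ∈ M.flats) (hGF : G ⊆ F) :
    (M.loc F).mu G = M.mu G := by
  induction G using Finset.strongInduction with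
  | H G ih =>
    have hbelow : (M.loc F).flats.filter (· ⊂ G) = M.flats.filter (· ⊂ G) := by
      rw [flats_loc hM hF, filter_filter]
      exact filter_congr fun K _ => ⟨And.right, fun h => ⟨h.1.trans hGF, h⟩⟩
    rw [mu_eq (M.loc F), mu_eq M, hbelow]
    refine if_congr Iff.rfl (congrArg _ (sum_congr rfl fun K hK => ?_)) rfl
    have hKG := (mem_filter.mp hK).2
    exact ih K hKG (hKG.1.trans hGF)

def zetaMatrix (M : PreMatroid α) : Matrix M.flats M.flats ℤ :=
  Matrix.of fun F H => if F.1 ⊆ H.1 then 1 else 0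

/-- The Möbius function `μ(F, H)` of the lattice of flats, computed as `μ(∅̂, H ∖ F)` in the
contraction `M^F`. -/
def moebiusMatrix (M : PreMatroid α) : Matrix M.flats M.flats ℤ :=
  Matrix.of fun F H => if F.1 ⊆ H.1 then (M.con F).mu (H.1 \ F.1) else 0

theorem sum_mu_con_sdiff (hM : M.IsMatroid) {F H : Finset α} (hF : F ∈ M.flats)
    (hH : H ∈ M.flats) :
    ∑ K ∈ M.flats with F ⊆ K ∧ K ⊆ H, (M.con F).mu (K \ F) = if F = H then 1 else 0 := by
  by_cases hFH : F ⊆ H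
  swap
  · rw [if_neg (by rintro rfl; exact hFH Subset.rfl)]
    exact sum_eq_zero fun K hK => absurd ((mem_filter.mp hK).2.1.trans (mem_filter.mp hK).2.2) hFH
  have hsub (K : Finset α) : K \ F ⊆ H \ F ↔ K ⊆ H := by
    rw [sdiff_le_iff, sup_sdiff_cancel_right hFH]
  have hbelow : ((M.con F).flats.filter (· ⊂ H \ F)).Nonempty ↔ F ≠ H := by
    constructor
    · rintro ⟨Y, hY⟩ rfl
      simpa using (mem_filter.mp hY).2
    · refine fun hne => ⟨∅, mem_filter.mpr ⟨?_, empty_ssubset.mpr (sdiff_nonempty.mpr ?_)⟩⟩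
      · simpa using sdiff_mem_flats_con hM hF Subset.rfl
      · exact fun h => hne (Subset.antisymm hFH h)
  have key := sum_mu_subset (M.con F) (sdiff_mem_flats_con hM hH hFH)
  rw [sum_filter, sum_flats_con hM hF, sum_filter] at key
  simp only [hsub, hbelow, ite_not] at key
  rw [sum_filter]
  simpa only [ite_and] using key

theorem moebiusMatrix_mul_zetaMatrix (hM : M.IsMatroid) :
    M.moebiusMatrix * M.zetaMatrix = 1 := by
  ext ⟨F, hF⟩ ⟨H, hH⟩
  simp only [mul_apply, one_apply, Subtype.mk.injEq]
  rw [← sum_mu_con_sdiff hM hF hH, sum_filter, ← sum_coe_sort M.flats]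
  refine sum_congr rfl fun K _ => ?_
  simp only [moebiusMatrix, zetaMatrix, of_apply, ite_and]
  split_ifs <;> simp

theorem zetaMatrix_mul_moebiusMatrix (hM : M.IsMatroid) :
    M.zetaMatrix * M.moebiusMatrix = 1 :=
  mul_eq_one_comm.mp (moebiusMatrix_mul_zetaMatrix hM)

theorem mu_con_of_r_eq_zero (hM : M.IsMatroid) {L H : Finset α} (hL : L ∈ M.flats)
    (hL0 : M.r L = 0) (hH : H ∈ M.flats) : (M.con L).mu (H \ L) = M.mu H := by
  have hLsub {G : Finset α} (hG : G ∈ M.flats) : L ⊆ G :=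
    subset_of_r_eq_zero hM (subset_of_mem_flats hL) hL0 hG
  -- `μ(∅̂, ·)` and `μ(L, ·)` both solve `x ᵥ* ζ = δ_L`, since `L` is the least flat
  have hzeta : (fun G : M.flats => M.mu G) ᵥ* M.zetaMatrix = Pi.single ⟨L, hL⟩ 1 := by
    ext ⟨H, hH⟩
    have hbelow : (M.flats.filter (· ⊂ H)).Nonempty ↔ H ≠ L := by
      constructor
      · rintro ⟨G, hG⟩ rfl
        exact (mem_filter.mp hG).2.not_subset (hLsub (mem_filter.mp hG).1)
      · exact fun hne => ⟨L, mem_filter.mpr ⟨hL, ssubset_of_subset_of_ne (hLsub hH) hne.symm⟩⟩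
    simp only [Pi.single_apply, Subtype.mk.injEq, vecMul, dotProduct, zetaMatrix, of_apply,
      mul_ite, mul_one, mul_zero]
    rw [sum_coe_sort M.flats (fun G => if G ⊆ H then M.mu G else 0), ← sum_filter,
      sum_mu_subset M hH]
    simp only [hbelow, ite_not]
  have := congrFun (congrArg (· ᵥ* M.moebiusMatrix) hzeta) ⟨H, hH⟩
  simp only [vecMul_vecMul, zetaMatrix_mul_moebiusMatrix hM, vecMul_one, single_vecMul,
    one_smul] at this
  simpa [moebiusMatrix, hLsub hH] using this.symm

/-! ### The characteristic polynomial -/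

theorem natDegree_charPoly_le (M : PreMatroid α) : M.charPoly.natDegree ≤ M.rk :=
  natDegree_sum_le_of_forall_le _ _ fun _ _ =>
    natDegree_C_mul_X_pow_le _ _ |>.trans (Nat.sub_le _ _)

theorem charPoly_loc_empty (M : PreMatroid α) : (M.loc ∅).charPoly = 1 := by
  have hflats : (M.loc ∅).flats = {∅} := by
    ext A
    simp [mem_flats_iff, PreMatroid.loc, subset_empty]
  rw [charPoly, hflats, sum_singleton, mu_eq, if_neg (by simp), rk_loc, loc_r_of_subset Subset.rfl]
  simp

theorem reflect_charPoly_loc (hM : M.IsMatroid) {F : Finset α} (hF : F ∈ M.flats) :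
    (M.loc F).charPoly.reflect (M.r F) = ∑ G ∈ M.flats with G ⊆ F, C (M.mu G) * X ^ M.r G := by
  rw [charPoly, reflect_sum, flats_loc hM hF]
  refine sum_congr rfl fun G hG => ?_
  have hGF := (mem_filter.mp hG).2
  rw [mu_loc hM hF hGF, rk_loc, loc_r_of_subset hGF, reflect_C_mul_X_pow,
    revAt_le (Nat.sub_le _ _), Nat.sub_sub_self (r_mono hM hGF)]

theorem charPoly_con (hM : M.IsMatroid) {F : Finset α} (hF : F ∈ M.flats) :
    (M.con F).charPoly =
      ∑ H ∈ M.flats with F ⊆ H, C ((M.con F).mu (H \ F)) * X ^ (M.rk - M.r H) := by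
  rw [charPoly, sum_flats_con hM hF, rk_con (subset_of_mem_flats hF)]
  refine sum_congr rfl fun H hH => ?_
  obtain ⟨hH, hFH⟩ := mem_filter.mp hH
  rw [con_r_sdiff (subset_of_mem_flats hH) hFH, Nat.sub_sub_sub_cancel_right (r_mono hM hFH)]

theorem charPoly_con_of_r_eq_zero (hM : M.IsMatroid) {L : Finset α} (hL : L ∈ M.flats)
    (hL0 : M.r L = 0) : (M.con L).charPoly = M.charPoly := by
  rw [charPoly_con hM hL, filter_true_of_mem fun H hH =>
    subset_of_r_eq_zero hM (subset_of_mem_flats hL) hL0 hH, charPoly]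
  exact sum_congr rfl fun H hH => by rw [mu_con_of_r_eq_zero hM hL hL0 hH]

theorem sum_mu_eq_zero (hM : M.IsMatroid) (hrk : 0 < M.rk) : ∑ G ∈ M.flats, M.mu G = 0 := by
  have hL : M.loops ⊂ M.E :=
    ssubset_of_subset_of_ne (filter_subset _ _) fun h => hrk.ne' (h ▸ r_loops hM : M.r M.E = 0)
  have := sum_mu_subset M ground_mem_flats
  rwa [filter_true_of_mem fun _ => subset_of_mem_flats,
    if_pos ⟨M.loops, mem_filter.mpr ⟨loops_mem_flats hM, hL⟩⟩] at this

theorem sum_reflect_charPoly_loc_mul_charPoly_con (hM : M.IsMatroid) (hrk : 0 < M.rk) :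
    ∑ F ∈ M.flats, (M.loc F).charPoly.reflect (M.r F) * (M.con F).charPoly = 0 := by
  set u : M.flats → ℤ[X] := fun G => C (M.mu G) * X ^ M.r G
  set v : M.flats → ℤ[X] := fun H => X ^ (M.rk - M.r H)
  have hu (F : M.flats) : (M.loc F).charPoly.reflect (M.r F) = (u ᵥ* M.zetaMatrix.map C) F := by
    rw [reflect_charPoly_loc hM F.2, sum_filter, ← sum_coe_sort M.flats]
    simp [u, vecMul, dotProduct, zetaMatrix]
  have hv (F : M.flats) : (M.con F).charPoly = (M.moebiusMatrix.map C *ᵥ v) F := by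
    rw [charPoly_con hM F.2, sum_filter, ← sum_coe_sort M.flats]
    simp [v, mulVec, dotProduct, moebiusMatrix]
  calc ∑ F ∈ M.flats, (M.loc F).charPoly.reflect (M.r F) * (M.con F).charPoly
      = (u ᵥ* M.zetaMatrix.map C) ⬝ᵥ (M.moebiusMatrix.map C *ᵥ v) := by
        rw [← sum_coe_sort M.flats]
        simp only [dotProduct, hu, hv]
    _ = u ⬝ᵥ v := by
        rw [← dotProduct_mulVec, mulVec_mulVec, ← Matrix.map_mul, zetaMatrix_mul_moebiusMatrix hM,
          Matrix.map_one _ C.map_zero C.map_one, one_mulVec]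
    _ = C (∑ G ∈ M.flats, M.mu G) * X ^ M.rk := by
        rw [map_sum, sum_mul, ← sum_coe_sort M.flats]
        refine sum_congr rfl fun G _ => ?_
        rw [mul_assoc, ← pow_add, Nat.add_sub_cancel' (r_le_rk hM (subset_of_mem_flats G.2))]
    _ = 0 := by rw [sum_mu_eq_zero hM hrk, C_0, zero_mul]

/-! ### The Kazhdan–Lusztig recursion -/

/-- The conditions of `KLconds` at a single `M`, for an assignment defined on all prematroids. -/
def KLcondsAt (p : PreMatroid α → ℤ[X]) (M : PreMatroid α) : Prop :=
  (M.rk = 0 → p M = 1) ∧ (0 < M.rk → 2 * (p M).natDegree < M.rk) ∧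
    (p M).reflect M.rk = ∑ F ∈ M.flats, (M.loc F).charPoly * p (M.con F)

theorem KLcondsAt.natDegree_le {p : PreMatroid α → ℤ[X]} (h : KLcondsAt p M) :
    (p M).natDegree ≤ M.rk := by
  rcases Nat.eq_zero_or_pos M.rk with h0 | hpos
  · rw [h.1 h0, natDegree_one]
    exact Nat.zero_le _
  · have := h.2.1 hpos
    omega

theorem sum_charPoly_mul_con_eq_add (hM : M.IsMatroid) (hl : M.loops = ∅)
    (g : PreMatroid α → ℤ[X]) :
    ∑ F ∈ M.flats, (M.loc F).charPoly * g (M.con F) =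
      g M + ∑ F ∈ M.flats with F ≠ ∅, (M.loc F).charPoly * g (M.con F) := by
  rw [← add_sum_erase _ _ (hl ▸ loops_mem_flats hM), charPoly_loc_empty M, con_empty hM, one_mul,
    filter_ne']

theorem sum_charPoly_mul_con_con (hM : M.IsMatroid) {F : Finset α} (hF : F ∈ M.flats)
    (g : PreMatroid α → ℤ[X]) :
    ∑ Y ∈ (M.con F).flats, ((M.con F).loc Y).charPoly * g ((M.con F).con Y) =
      ∑ H ∈ M.flats with F ⊆ H, ((M.loc H).con F).charPoly * g (M.con H) := by
  rw [sum_flats_con hM hF]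
  refine sum_congr rfl fun H hH => ?_
  obtain ⟨hH, hFH⟩ := mem_filter.mp hH
  rw [loc_con (subset_of_mem_flats hH) hFH, con_con hM (subset_of_mem_flats hH) hFH]

theorem sum_charPoly_mul_con_loops (hM : M.IsMatroid) (g : PreMatroid α → ℤ[X]) :
    ∑ Y ∈ (M.con M.loops).flats, ((M.con M.loops).loc Y).charPoly * g ((M.con M.loops).con Y) =
      ∑ H ∈ M.flats, (M.loc H).charPoly * g (M.con H) := by
  rw [sum_charPoly_mul_con_con hM (loops_mem_flats hM),
    filter_true_of_mem fun H => loops_subset_of_mem_flats hM]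
  refine sum_congr rfl fun H hH => ?_
  have hLH := loops_subset_of_mem_flats hM hH
  rw [charPoly_con_of_r_eq_zero (hM.loc H)]
  · rw [flats_loc hM hH]
    exact mem_filter.mpr ⟨loops_mem_flats hM, hLH⟩
  · rw [loc_r_of_subset hLH, r_loops hM]

theorem sum_reflect_charPoly_loc_mul_charPoly_con_loc (hM : M.IsMatroid) (hl : M.loops = ∅)
    {H : Finset α} (hH : H ∈ M.flats) (hne : H ≠ ∅) :
    ∑ F ∈ M.flats with F ≠ ∅ ∧ F ⊆ H,
      (M.loc F).charPoly.reflect (M.r F) * ((M.loc H).con F).charPoly = -(M.loc H).charPoly := by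
  have hMH := hM.loc H
  have hrk : 0 < (M.loc H).rk := by
    rw [rk_loc, Nat.pos_iff_ne_zero]
    exact fun h0 => hne (eq_empty_of_r_eq_zero hM hl (subset_of_mem_flats hH) h0)
  have h0 : ∅ ∈ (M.loc H).flats := by
    rw [flats_loc hM hH]
    exact mem_filter.mpr ⟨hl ▸ loops_mem_flats hM, empty_subset H⟩
  have key := sum_reflect_charPoly_loc_mul_charPoly_con hMH hrk
  rw [← add_sum_erase _ _ h0, ← filter_ne', flats_loc hM hH, filter_filter,
    loc_loc (empty_subset H), charPoly_loc_empty M, con_empty hMH, loc_r_of_subset (empty_subset _), r_empty hM,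
    reflect_one, pow_zero, one_mul] at key
  rw [eq_neg_iff_add_eq_zero, add_comm, ← key]
  refine congrArg _ (sum_congr (filter_congr fun F _ => and_comm) fun F hF => ?_)
  have hFH := (mem_filter.mp hF).2.1
  rw [loc_loc hFH, loc_r_of_subset hFH]

theorem reflect_sum_charPoly_mul_eq_neg (hM : M.IsMatroid) (hl : M.loops = ∅)
    {g : PreMatroid α → ℤ[X]} (hg : ∀ F ∈ M.flats, F ≠ ∅ → KLcondsAt g (M.con F)) :
    (∑ F ∈ M.flats with F ≠ ∅, (M.loc F).charPoly * g (M.con F)).reflect M.rk =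
      -∑ F ∈ M.flats with F ≠ ∅, (M.loc F).charPoly * g (M.con F) := by
  have hterm : ∀ F ∈ M.flats.filter (· ≠ ∅),
      ((M.loc F).charPoly * g (M.con F)).reflect M.rk = ∑ H ∈ M.flats with F ⊆ H,
        (M.loc F).charPoly.reflect (M.r F) * (((M.loc H).con F).charPoly * g (M.con H)) := by
    intro F hF
    obtain ⟨hF, hne⟩ := mem_filter.mp hF
    have hFE := subset_of_mem_flats hF
    rw [← Nat.add_sub_of_le (r_le_rk hM hFE),
      reflect_mul _ _ ((natDegree_charPoly_le _).trans_eq (rk_loc F))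
        ((hg F hF hne).natDegree_le.trans_eq (rk_con hFE)),
      ← rk_con hFE, (hg F hF hne).2.2, sum_charPoly_mul_con_con hM hF, mul_sum]
  rw [reflect_sum, sum_congr rfl hterm, ← sum_neg_distrib,
    sum_comm' (t' := M.flats.filter (· ≠ ∅)) (s' := fun H => M.flats.filter fun F => F ≠ ∅ ∧ F ⊆ H)]
  · refine sum_congr rfl fun H hH => ?_
    obtain ⟨hH, hne⟩ := mem_filter.mp hH
    simp_rw [← mul_assoc]
    rw [← sum_mul, sum_reflect_charPoly_loc_mul_charPoly_con_loc hM hl hH hne, neg_mul]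
  · intro F H
    simp only [mem_filter]
    constructor
    · rintro ⟨⟨hF, hne⟩, hH, hFH⟩
      exact ⟨⟨hF, hne, hFH⟩, hH, fun h => hne (subset_empty.mp (h ▸ hFH))⟩
    · rintro ⟨⟨hF, hne, hFH⟩, hH, -⟩
      exact ⟨⟨hF, hne⟩, hH, hFH⟩

theorem natDegree_sum_charPoly_mul_le (hM : M.IsMatroid) {g : PreMatroid α → ℤ[X]}
    (hg : ∀ F ∈ M.flats, F ≠ ∅ → KLcondsAt g (M.con F)) :
    (∑ F ∈ M.flats with F ≠ ∅, (M.loc F).charPoly * g (M.con F)).natDegree ≤ M.rk := by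
  refine natDegree_sum_le_of_forall_le _ _ fun F hF => natDegree_mul_le.trans ?_
  obtain ⟨hF, hne⟩ := mem_filter.mp hF
  have := (natDegree_charPoly_le (M.loc F)).trans_eq (rk_loc F)
  have := (hg F hF hne).natDegree_le.trans_eq (rk_con (subset_of_mem_flats hF))
  have := r_le_rk hM (subset_of_mem_flats hF)
  omega

/-! ### Existence and uniqueness -/

noncomputable def KL (M : PreMatroid α) : ℤ[X] :=
  if h : M.loops.Nonempty then KL (M.con M.loops)
  else if M.rk = 0 then 1
  else -lowerHalf M.rk
    (∑ F ∈ (M.flats.filter (· ≠ ∅)).attach, (M.loc F).charPoly * KL (M.con F))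
termination_by M.E.card
decreasing_by
  · exact card_con_lt (filter_subset _ _) h
  · obtain ⟨hF, hne⟩ := mem_filter.mp F.2
    exact card_con_lt (subset_of_mem_flats hF) (nonempty_iff_ne_empty.mpr hne)

theorem KL_of_loops_nonempty (h : M.loops.Nonempty) : KL M = KL (M.con M.loops) := by
  rw [KL, dif_pos h]

theorem KL_of_rk_eq_zero (hl : M.loops = ∅) (h : M.rk = 0) : KL M = 1 := by
  rw [KL, dif_neg (not_nonempty_iff_eq_empty.mpr hl), if_pos h]

theorem KL_of_rk_pos (hl : M.loops = ∅) (h : 0 < M.rk) :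
    KL M = -lowerHalf M.rk (∑ F ∈ M.flats with F ≠ ∅, (M.loc F).charPoly * KL (M.con F)) := by
  rw [KL, dif_neg (not_nonempty_iff_eq_empty.mpr hl), if_neg h.ne', sum_attach _
    fun F => (M.loc F).charPoly * KL (M.con F)]

theorem KLcondsAt_KL_of_loops_nonempty (hM : M.IsMatroid) (hl : M.loops.Nonempty)
    (h : KLcondsAt KL (M.con M.loops)) : KLcondsAt KL M := by
  have hrk : (M.con M.loops).rk = M.rk := by
    rw [rk_con (subset_of_mem_flats (loops_mem_flats hM)), r_loops hM, Nat.sub_zero]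
  rw [KLcondsAt, KL_of_loops_nonempty hl, ← hrk, ← sum_charPoly_mul_con_loops hM]
  exact h

theorem KLcondsAt_KL_of_loops_eq_empty (hM : M.IsMatroid) (hl : M.loops = ∅)
    (h : ∀ F ∈ M.flats, F ≠ ∅ → KLcondsAt KL (M.con F)) : KLcondsAt KL M := by
  rcases Nat.eq_zero_or_pos M.rk with h0 | hpos
  · refine ⟨fun _ => KL_of_rk_eq_zero hl h0, fun h => absurd h0 h.ne', ?_⟩
    rw [sum_charPoly_mul_con_eq_add hM hl, sum_eq_zero, add_zero, KL_of_rk_eq_zero hl h0, h0,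
      reflect_one, pow_zero]
    intro F hF
    obtain ⟨hF, hne⟩ := mem_filter.mp hF
    have := r_le_rk hM (subset_of_mem_flats hF)
    exact absurd (eq_empty_of_r_eq_zero hM hl (subset_of_mem_flats hF) (by omega)) hne
  · refine ⟨fun h => absurd h hpos.ne', fun _ => ?_, ?_⟩
    · rw [KL_of_rk_pos hl hpos, natDegree_neg]
      exact two_mul_natDegree_lowerHalf_lt hpos _
    · rw [sum_charPoly_mul_con_eq_add hM hl, KL_of_rk_pos hl hpos]
      exact reflect_neg_lowerHalf (natDegree_sum_charPoly_mul_le hM h)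
        (reflect_sum_charPoly_mul_eq_neg hM hl h)

theorem KLcondsAt_KL (hM : M.IsMatroid) : KLcondsAt KL M := by
  induction hn : M.E.card using Nat.strong_induction_on generalizing M with
  | _ n ih =>
  have hcon (F : Finset α) (hF : F ⊆ M.E) (hne : F.Nonempty) : KLcondsAt KL (M.con F) :=
    ih _ (hn ▸ card_con_lt hF hne) (hM.con hF) rfl
  by_cases hl : M.loops.Nonempty
  · exact KLcondsAt_KL_of_loops_nonempty hM hl (hcon _ (filter_subset _ _) hl)
  · exact KLcondsAt_KL_of_loops_eq_empty hM (not_nonempty_iff_eq_empty.mp hl) fun F hF hne =>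
      hcon F (subset_of_mem_flats hF) (nonempty_iff_ne_empty.mpr hne)

theorem KLcondsAt.eq (hM : M.IsMatroid) {f g : PreMatroid α → ℤ[X]} (hf : KLcondsAt f M)
    (hg : KLcondsAt g M) (h : ∀ F ∈ M.flats, F ≠ ∅ → f (M.con F) = g (M.con F)) : f M = g M := by
  by_cases hl : M.loops.Nonempty
  · have hsum : ∑ F ∈ M.flats, (M.loc F).charPoly * f (M.con F) =
        ∑ F ∈ M.flats, (M.loc F).charPoly * g (M.con F) := sum_congr rfl fun F hF => by
      rw [h F hF (nonempty_iff_ne_empty.mp (hl.mono (loops_subset_of_mem_flats hM hF)))]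
    rw [← reflect_reflect (p := f M) (N := M.rk), hf.2.2, hsum, ← hg.2.2, reflect_reflect]
  rw [not_nonempty_iff_eq_empty] at hl
  rcases Nat.eq_zero_or_pos M.rk with h0 | hpos
  · rw [hf.1 h0, hg.1 h0]
  -- the difference is palindromic of degree `< rk / 2`
  have hsum : ∑ F ∈ M.flats with F ≠ ∅, (M.loc F).charPoly * f (M.con F) =
      ∑ F ∈ M.flats with F ≠ ∅, (M.loc F).charPoly * g (M.con F) := sum_congr rfl fun F hF => by
    rw [h F (mem_filter.mp hF).1 (mem_filter.mp hF).2]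
  rw [← sub_eq_zero]
  refine eq_zero_of_reflect_eq_self (d := M.rk) ?_ ?_
  · have := natDegree_sub_le (f M) (g M)
    have := hf.2.1 hpos
    have := hg.2.1 hpos
    omega
  · rw [reflect_sub, hf.2.2, hg.2.2, sum_charPoly_mul_con_eq_add hM hl,
      sum_charPoly_mul_con_eq_add hM hl g, hsum]
    abel

theorem eq_of_forall_KLcondsAt {f g : PreMatroid α → ℤ[X]}
    (hf : ∀ N : PreMatroid α, N.IsMatroid → KLcondsAt f N)
    (hg : ∀ N : PreMatroid α, N.IsMatroid → KLcondsAt g N) (hM : M.IsMatroid) : f M = g M := by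
  induction hn : M.E.card using Nat.strong_induction_on generalizing M with
  | _ n ih =>
  refine (hf M hM).eq hM (hg M hM) fun F hF hne => ih _ ?_ (hM.con (subset_of_mem_flats hF)) rfl
  exact hn ▸ card_con_lt (subset_of_mem_flats hF) (nonempty_iff_ne_empty.mpr hne)

end PreMatroid

open PreMatroid

open Classical in
noncomputable def KLfun.extend (P : KLfun) (α : Type) [DecidableEq α] (N : PreMatroid α) :
    ℤ[X] :=
  if h : N.IsMatroid then P α N h else 0

theorem KLfun.extend_of_isMatroid (P : KLfun) {α : Type} [DecidableEq α] {N : PreMatroid α}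
    (h : N.IsMatroid) : P.extend α N = P α N h :=
  dif_pos h

theorem KLconds.KLcondsAt_extend {P : KLfun} (hP : KLconds P) {α : Type} [DecidableEq α]
    {M : PreMatroid α} (hM : M.IsMatroid) : KLcondsAt (P.extend α) M := by
  obtain ⟨h1, h2, h3⟩ := hP α M hM
  rw [KLcondsAt, P.extend_of_isMatroid hM, ← sum_attach M.flats]
  exact ⟨h1, h2, h3.trans (sum_congr rfl fun F _ => by rw [P.extend_of_isMatroid])⟩

theorem KLconds_of_forall_KLcondsAt (f : ∀ (α : Type) [DecidableEq α], PreMatroid α → ℤ[X])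
    (hf : ∀ (α : Type) [DecidableEq α] (M : PreMatroid α), M.IsMatroid → KLcondsAt (f α) M) :
    KLconds fun α _ M _ => f α M := fun α _ M hM =>
  let ⟨h1, h2, h3⟩ := hf α M hM
  ⟨h1, h2, h3.trans (sum_attach M.flats _).symm⟩

/-- There is a unique way to assign to each matroid `M` a polynomial
`P_M(t) ∈ ℤ[t]` such that: (1) `P_M = 1` if `rk M = 0`; (2) `deg P_M < (rk M)/2` if
`rk M > 0`; (3) `t^{rk M} P_M(1/t) = ∑_F χ_{M_F}(t) P_{M^F}(t)`, the sum over all flats. -/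
theorem kl_exists_unique : ∃! P : KLfun, KLconds P := by
  refine ⟨fun α _ M _ => KL M, KLconds_of_forall_KLcondsAt (fun _ _ => KL)
    fun _ _ _ hM => KLcondsAt_KL hM, fun P hP => ?_⟩
  funext α _ M hM
  rw [← P.extend_of_isMatroid hM]
  exact eq_of_forall_KLcondsAt (fun N hN => hP.KLcondsAt_extend hN) (fun N hN => KLcondsAt_KL hN) hM
end

section
/- For every fixed positive integer d, the sequence \Gamma(d) = { 1/((i+1)!(d+1-i)!) }_{i \ge 0} is a multiplier sequence: for any real polynomial f(t) = \sum a_i t^i having only real roots, the polynomial \sum a_i t^i / ((i+1)!(d+1-i)!) is either identically zero or has only real roots. -/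
/-!
Laguerre: if `h` and `p` are real-rooted, so is `h(D) p`. It suffices to treat `h = X - c`, and
`q' - c q` is real-rooted with `q`: Rolle's theorem for `exp (-c t) q(t)` puts one of its roots
between consecutive roots of `q`, a `k`-fold root of `q` is a `(k - 1)`-fold root of it, and a real
polynomial that misses at most one real root splits.

With `h = f`, `p = Xⁿ` and reversal, `(n.descFactorial i)ᵢ` is a multiplier sequence. Reversing a
polynomial of degree `m`, applying `((m + 1).descFactorial i)ᵢ` and reversing back multiplies its
`i`-th coefficient by `(m + 1)! / (i + 1)!` and shifts it up by one, so `(1 / (i + 1)!)ᵢ` is one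
too. `Γ(d)` is their product times `1 / (d + 1)!`.
-/

open Polynomial
open scoped Nat

namespace Polynomial

theorem splits_of_forall_aeval_eq_zero_im_eq_zero {p : ℝ[X]}
    (hp : ∀ z : ℂ, aeval z p = 0 → z.im = 0) : p.Splits := by
  refine Splits.of_splits_map (algebraMap ℝ ℂ) (IsAlgClosed.splits _) fun z hz => ?_
  have him := hp z (by simpa [aeval_def, eval_map] using (mem_roots'.mp hz).2)
  exact ⟨z.re, Complex.ext (by simp) (by simp [him])⟩

theorem Splits.im_eq_zero_of_aeval_eq_zero {p : ℝ[X]} (hp : p.Splits) (hp0 : p ≠ 0) {z : ℂ}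
    (hz : aeval z p = 0) : z.im = 0 := by
  obtain ⟨x, rfl⟩ := hp.mem_range_of_isRoot hp0 (i := algebraMap ℝ ℂ)
    (by simpa [IsRoot, aeval_def, eval_map] using hz)
  simp

theorem Splits.reverse {K : Type*} [Field K] {p : K[X]} (hp : p.Splits) : p.reverse.Splits := by
  induction hp using Submonoid.closure_induction with
  | mem q hq =>
    obtain ⟨a, rfl⟩ | ⟨a, rfl⟩ := hq
    · simp
    · exact Splits.of_natDegree_le_one ((reverse_natDegree_le _).trans (natDegree_X_add_C a).le)
  | one => rw [← C_1, reverse_C]; exact Splits.C 1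
  | mul q r _ _ hq hr => rw [reverse_mul_of_domain]; exact hq.mul hr

theorem Splits.reflect {K : Type*} [Field K] {p : K[X]} (hp : p.Splits) {N : ℕ}
    (hN : p.natDegree ≤ N) : (p.reflect N).Splits := by
  have h := reflect_mul (1 : K[X]) p (F := N - p.natDegree) (by simp) le_rfl
  rw [one_mul, Nat.sub_add_cancel hN, reflect_one] at h
  rw [h]
  exact (Splits.X_pow _).mul hp.reverse

theorem splits_of_natDegree_le_card_roots_add_one {K : Type*} [Field K] {p : K[X]}
    (hp : p.natDegree ≤ Multiset.card p.roots + 1) : p.Splits := by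
  obtain ⟨q, hprod, hdeg, -⟩ := exists_prod_multiset_X_sub_C_mul p
  rw [← hprod]
  refine Splits.mul (Splits.multisetProd ?_) (Splits.of_natDegree_le_one (by omega))
  simp only [Multiset.mem_map]
  rintro _ ⟨a, -, rfl⟩
  exact Splits.X_sub_C a

theorem card_roots_le_card_roots_add_one_of_interlaced {p q : ℝ[X]} (hq : q ≠ 0)
    (hmult : ∀ x, p.rootMultiplicity x - 1 ≤ q.rootMultiplicity x)
    (hbetween : ∀ x y, p.IsRoot x → p.IsRoot y → x < y → ∃ z ∈ Set.Ioo x y, q.IsRoot z) :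
    Multiset.card p.roots ≤ Multiset.card q.roots + 1 := by
  rcases eq_or_ne p 0 with rfl | hp
  · simp
  set S := p.roots.toFinset
  set T := q.roots.toFinset \ S
  have hST : S.card ≤ T.card + 1 := by
    refine Finset.card_le_sdiff_of_interleaved fun x hx y hy hxy _ => ?_
    rw [Multiset.mem_toFinset, mem_roots hp] at hx hy
    obtain ⟨z, hz, hqz⟩ := hbetween x y hx hy hxy
    exact ⟨z, by rwa [Multiset.mem_toFinset, mem_roots hq], hz⟩
  calc Multiset.card p.roots
      = ∑ x ∈ S, p.roots.count x := (Multiset.toFinset_sum_count_eq _).symm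
    _ ≤ ∑ x ∈ S, (q.roots.count x + 1) := by
        gcongr with x
        rw [count_roots, count_roots]
        have := hmult x
        omega
    _ = ∑ x ∈ S, q.roots.count x + S.card := by
        rw [Finset.sum_add_distrib, Finset.card_eq_sum_ones]
    _ ≤ ∑ x ∈ S, q.roots.count x + (∑ x ∈ T, q.roots.count x + 1) := by
        gcongr
        refine hST.trans (Nat.add_le_add_right ?_ 1)
        rw [Finset.card_eq_sum_ones]
        gcongr with x hx
        exact Multiset.count_pos.2 (Multiset.mem_toFinset.1 (Finset.mem_sdiff.1 hx).1)
    _ = ∑ x ∈ q.roots.toFinset ∪ S, q.roots.count x + 1 := by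
        rw [← add_assoc, ← Finset.sum_union Finset.disjoint_sdiff, Finset.union_sdiff_self_eq_union,
          Finset.union_comm]
    _ = Multiset.card q.roots + 1 := by
        rw [← Finset.sum_subset Finset.subset_union_left, Multiset.toFinset_sum_count_eq]
        intro x _ hx
        rwa [Multiset.count_eq_zero, ← Multiset.mem_toFinset]

theorem exists_isRoot_derivative_sub_C_mul_mem_Ioo {q : ℝ[X]} (c : ℝ) {x y : ℝ} (hxy : x < y)
    (hx : q.IsRoot x) (hy : q.IsRoot y) :
    ∃ z ∈ Set.Ioo x y, (derivative q - C c * q).IsRoot z := by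
  -- Rolle's theorem for `t ↦ exp (-c t) q(t)`, whose derivative is `exp (-c t) (q' - c q)(t)`.
  have hderiv (t : ℝ) : HasDerivAt (fun s => Real.exp (-c * s) * q.eval s)
      (Real.exp (-c * t) * (derivative q - C c * q).eval t) t := by
    have hexp : HasDerivAt (fun s => Real.exp (-c * s)) (Real.exp (-c * t) * -c) t := by
      simpa using ((hasDerivAt_id t).const_mul (-c)).exp
    refine (hexp.mul (q.hasDerivAt t)).congr_deriv ?_
    simp only [eval_sub, eval_mul, eval_C]
    ring
  obtain ⟨z, hz, hz0⟩ := exists_hasDerivAt_eq_zero hxy (by fun_prop)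
    (by simp [hx.eq_zero, hy.eq_zero]) fun t _ => hderiv t
  exact ⟨z, hz, (mul_eq_zero.mp hz0).resolve_left (Real.exp_ne_zero _)⟩

theorem rootMultiplicity_sub_one_le_rootMultiplicity_derivative_sub_C_mul {R : Type*}
    [CommRing R] [IsDomain R] {q : R[X]} (c x : R) (hq : derivative q - C c * q ≠ 0) :
    q.rootMultiplicity x - 1 ≤ (derivative q - C c * q).rootMultiplicity x := by
  rw [le_rootMultiplicity_iff hq]
  have hdvd := q.pow_rootMultiplicity_dvd x
  exact dvd_sub (pow_sub_one_dvd_derivative_of_pow_dvd hdvd)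
    (((pow_dvd_pow _ (Nat.sub_le _ 1)).trans hdvd).mul_left _)

theorem natDegree_derivative_sub_C_mul_le {R : Type*} [CommRing R] (q : R[X]) (c : R) :
    (derivative q - C c * q).natDegree ≤ q.natDegree :=
  (natDegree_sub_le _ _).trans <| max_le ((natDegree_derivative_le q).trans (Nat.sub_le _ _))
    (natDegree_C_mul_le _ _)

theorem aeval_derivative_X_sub_C_mul_apply {R : Type*} [CommRing R] (c : R) (h p : R[X]) :
    aeval (derivative : Module.End R R[X]) ((X - C c) * h) p =
      derivative (aeval (derivative : Module.End R R[X]) h p) -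
        C c * aeval (derivative : Module.End R R[X]) h p := by
  simp [smul_eq_C_mul]

theorem natDegree_aeval_derivative_apply_le {R : Type*} [CommSemiring R] (h p : R[X]) :
    (aeval (derivative : Module.End R R[X]) h p).natDegree ≤ p.natDegree := by
  rw [aeval_eq_sum_range, LinearMap.sum_apply]
  refine natDegree_sum_le_of_forall_le _ _ fun i _ => (natDegree_smul_le _ _).trans ?_
  rw [Module.End.pow_apply]
  exact (natDegree_iterate_derivative p i).trans (Nat.sub_le _ _)

theorem Splits.derivative_sub_C_mul {q : ℝ[X]} (hq : q.Splits) (c : ℝ) :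
    (derivative q - C c * q).Splits := by
  by_cases hw : derivative q - C c * q = 0
  · rw [hw]; exact Splits.zero
  refine splits_of_natDegree_le_card_roots_add_one ?_
  calc (derivative q - C c * q).natDegree
      ≤ q.natDegree := natDegree_derivative_sub_C_mul_le q c
    _ = Multiset.card q.roots := hq.natDegree_eq_card_roots
    _ ≤ _ := card_roots_le_card_roots_add_one_of_interlaced hw
        (fun x => rootMultiplicity_sub_one_le_rootMultiplicity_derivative_sub_C_mul c x hw)
        (fun _ _ hx hy hxy => exists_isRoot_derivative_sub_C_mul_mem_Ioo c hxy hx hy)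

theorem Splits.aeval_derivative_apply {h p : ℝ[X]} (hh : h.Splits) (hp : p.Splits) :
    (aeval (derivative : Module.End ℝ ℝ[X]) h p).Splits := by
  rw [hh.eq_prod_roots, map_mul, aeval_C, Module.End.mul_apply, Module.algebraMap_end_apply,
    smul_eq_C_mul]
  refine Splits.C_mul ?_ _
  induction h.roots using Multiset.induction_on with
  | empty => simpa
  | cons a s ih =>
    rw [Multiset.map_cons, Multiset.prod_cons, aeval_derivative_X_sub_C_mul_apply]
    exact ih.derivative_sub_C_mul a

section ScaleCoeffs

variable {R : Type*} [Semiring R]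

noncomputable def scaleCoeffs (γ : ℕ → R) (f : R[X]) : R[X] :=
  ∑ i ∈ Finset.range (f.natDegree + 1), C (f.coeff i * γ i) * X ^ i

@[simp]
theorem coeff_scaleCoeffs (γ : ℕ → R) (f : R[X]) (k : ℕ) :
    (scaleCoeffs γ f).coeff k = f.coeff k * γ k := by
  simp only [scaleCoeffs, finsetSum_coeff, coeff_C_mul_X_pow, Finset.sum_ite_eq,
    Finset.mem_range]
  split_ifs with hk
  · rfl
  · rw [coeff_eq_zero_of_natDegree_lt (by omega), zero_mul]

theorem natDegree_scaleCoeffs_le (γ : ℕ → R) (f : R[X]) :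
    (scaleCoeffs γ f).natDegree ≤ f.natDegree :=
  natDegree_le_iff_coeff_eq_zero.mpr fun k hk => by
    rw [coeff_scaleCoeffs, coeff_eq_zero_of_natDegree_lt hk, zero_mul]

theorem scaleCoeffs_add (γ : ℕ → R) (f g : R[X]) :
    scaleCoeffs γ (f + g) = scaleCoeffs γ f + scaleCoeffs γ g := by
  ext k; simp [add_mul]

theorem scaleCoeffs_monomial (γ : ℕ → R) (i : ℕ) (a : R) :
    scaleCoeffs γ (monomial i a) = monomial i (a * γ i) := by
  ext k; simp only [coeff_scaleCoeffs, coeff_monomial]; split_ifs <;> simp_all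

theorem scaleCoeffs_scaleCoeffs (γ δ : ℕ → R) (f : R[X]) :
    scaleCoeffs γ (scaleCoeffs δ f) = scaleCoeffs (δ * γ) f := by
  ext k; simp [mul_assoc]

end ScaleCoeffs

theorem scaleCoeffs_const_mul {R : Type*} [CommSemiring R] (c : R) (γ : ℕ → R) (f : R[X]) :
    scaleCoeffs (fun i => c * γ i) f = C c * scaleCoeffs γ f := by
  ext k; simp [mul_left_comm]

theorem reflect_aeval_derivative_X_pow {R : Type*} [CommSemiring R] (n : ℕ) (f : R[X]) :
    reflect n (aeval (derivative : Module.End R R[X]) f (X ^ n)) =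
      scaleCoeffs (fun i => (n.descFactorial i : R)) f := by
  induction f using Polynomial.induction_on' with
  | add f g hf hg => rw [map_add, LinearMap.add_apply, reflect_add, hf, hg, scaleCoeffs_add]
  | monomial i a =>
    rw [scaleCoeffs_monomial, aeval_monomial, Module.End.mul_apply, Module.End.pow_apply,
      iterate_derivative_X_pow_eq_smul]
    rcases le_or_gt i n with hin | hni
    · rw [Module.algebraMap_end_apply, smul_smul, smul_eq_C_mul, reflect_C_mul_X_pow,
        revAt_le (Nat.sub_le n i), Nat.sub_sub_self hin, C_mul_X_pow_eq_monomial]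
    · simp [Nat.descFactorial_eq_zero_iff_lt.mpr hni]

theorem X_mul_scaleCoeffs_inv_factorial_succ {K : Type*} [Field K] [CharZero K] {g : K[X]}
    {m : ℕ} (hm : g.natDegree ≤ m) :
    X * scaleCoeffs (fun i => ((i + 1)! : K)⁻¹) g = C ((m + 1)! : K)⁻¹ *
      reflect (m + 1) (scaleCoeffs (fun i => ((m + 1).descFactorial i : K)) (reflect m g)) := by
  ext k
  rcases k with _ | j
  · rw [coeff_X_mul_zero, coeff_C_mul, coeff_reflect, revAt_zero, coeff_scaleCoeffs,
      coeff_reflect, revAt_eq_self_of_lt (by omega), coeff_eq_zero_of_natDegree_lt (by omega)]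
    simp
  rw [coeff_X_mul, coeff_scaleCoeffs, coeff_C_mul, coeff_reflect, coeff_scaleCoeffs,
    coeff_reflect]
  rcases le_or_gt j m with hj | hj
  · rw [revAt_le (show j + 1 ≤ m + 1 by omega), show m + 1 - (j + 1) = m - j by omega,
      revAt_le (Nat.sub_le m j), Nat.sub_sub_self hj,
      ← Nat.factorial_mul_descFactorial (show m - j ≤ m + 1 by omega),
      show m + 1 - (m - j) = j + 1 by omega]
    have hdesc : ((m + 1).descFactorial (m - j) : K) ≠ 0 :=
      Nat.cast_ne_zero.mpr (Nat.descFactorial_pos.mpr (by omega)).ne'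
    push_cast
    field_simp
  · rw [revAt_eq_self_of_lt (show m + 1 < j + 1 by omega),
      revAt_eq_self_of_lt (show m < j + 1 by omega),
      coeff_eq_zero_of_natDegree_lt (by omega), coeff_eq_zero_of_natDegree_lt (by omega)]
    simp

end Polynomial

-- Over `ℝ`, `Splits` means "zero or real-rooted".
def IsMultiplierSequence (γ : ℕ → ℝ) : Prop :=
  ∀ f : ℝ[X], f.Splits → (scaleCoeffs γ f).Splits

namespace IsMultiplierSequence

variable {γ δ : ℕ → ℝ}

theorem mul (hγ : IsMultiplierSequence γ) (hδ : IsMultiplierSequence δ) :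
    IsMultiplierSequence (γ * δ) := fun f hf => by
  rw [← scaleCoeffs_scaleCoeffs]
  exact hδ _ (hγ f hf)

theorem const_mul (hγ : IsMultiplierSequence γ) (c : ℝ) :
    IsMultiplierSequence (fun i => c * γ i) := fun f hf => by
  rw [scaleCoeffs_const_mul]
  exact (hγ f hf).C_mul c

end IsMultiplierSequence

theorem isMultiplierSequence_descFactorial (n : ℕ) :
    IsMultiplierSequence (fun i => (n.descFactorial i : ℝ)) := fun f hf => by
  rw [← reflect_aeval_derivative_X_pow]
  exact (hf.aeval_derivative_apply (Splits.X_pow n)).reflect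
    ((natDegree_aeval_derivative_apply_le _ _).trans (natDegree_X_pow_le n))

theorem isMultiplierSequence_inv_factorial_succ :
    IsMultiplierSequence (fun i => ((i + 1)! : ℝ)⁻¹) := fun g hg => by
  have hdeg : (scaleCoeffs (fun i => ((g.natDegree + 1).descFactorial i : ℝ))
      (reflect g.natDegree g)).natDegree ≤ g.natDegree + 1 :=
    (natDegree_scaleCoeffs_le _ _).trans (natDegree_reflect_le.trans (by simp))
  have hsplit := ((isMultiplierSequence_descFactorial _ _ (hg.reflect le_rfl)).reflect hdeg).C_mul
    ((g.natDegree + 1)! : ℝ)⁻¹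
  rw [← X_mul_scaleCoeffs_inv_factorial_succ le_rfl] at hsplit
  exact splits_X_mul.mp hsplit

-- `Γ(d)`; the `if` makes `1 / (d + 1 - i)! = 0` for `i > d + 1`, which truncated subtraction
-- would not.
noncomputable def gammaSeq (d i : ℕ) : ℝ :=
  if i ≤ d + 1 then (1 : ℝ) / ((i + 1).factorial * (d + 1 - i).factorial) else 0

theorem isMultiplierSequence_gammaSeq (d : ℕ) : IsMultiplierSequence (gammaSeq d) := by
  convert ((isMultiplierSequence_descFactorial (d + 1)).mul
    isMultiplierSequence_inv_factorial_succ).const_mul ((d + 1)! : ℝ)⁻¹ using 1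
  funext i
  rw [gammaSeq, Pi.mul_apply]
  split_ifs with hi
  · have hdesc : ((d + 1).descFactorial i : ℝ) ≠ 0 :=
      Nat.cast_ne_zero.mpr (Nat.descFactorial_pos.mpr hi).ne'
    rw [← Nat.factorial_mul_descFactorial hi]
    push_cast
    field_simp
  · rw [Nat.descFactorial_eq_zero_iff_lt.mpr (by omega)]
    simp

theorem gamma_multiplier_sequence_general (d : ℕ) (f : Polynomial ℝ)
    (hf : ∀ z : ℂ, Polynomial.aeval z f = 0 → z.im = 0) :
    (∑ i ∈ Finset.range (f.natDegree + 1),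
        Polynomial.C (f.coeff i * (if i ≤ d + 1 then
          (1 : ℝ) / ((i + 1).factorial * (d + 1 - i).factorial) else 0)) *
          Polynomial.X ^ i) = 0 ∨
      ∀ z : ℂ, Polynomial.aeval z (∑ i ∈ Finset.range (f.natDegree + 1),
        Polynomial.C (f.coeff i * (if i ≤ d + 1 then
          (1 : ℝ) / ((i + 1).factorial * (d + 1 - i).factorial) else 0)) *
          Polynomial.X ^ i) = 0 → z.im = 0 := by
  have hsplit : (scaleCoeffs (gammaSeq d) f).Splits :=
    isMultiplierSequence_gammaSeq d f (splits_of_forall_aeval_eq_zero_im_eq_zero hf)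
  exact (em _).imp id fun h0 _ hz => hsplit.im_eq_zero_of_aeval_eq_zero h0 hz

/-- For every fixed positive integer `d`, the sequence
`Γ(d) = { 1/((i+1)!(d+1-i)!) }` (with the convention `1/(d+1-i)! = 0` for `i > d+1`) is a
multiplier sequence: for any real polynomial `f` having only real roots, the polynomial
obtained by multiplying the `i`-th coefficient of `f` by `1/((i+1)!(d+1-i)!)` is either
identically zero or has only real roots. -/
theorem gamma_multiplier_sequence (d : ℕ) (hd : 0 < d) (f : Polynomial ℝ)
    (hf : ∀ z : ℂ, Polynomial.aeval z f = 0 → z.im = 0) :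
    (∑ i ∈ Finset.range (f.natDegree + 1),
        Polynomial.C (f.coeff i * (if i ≤ d + 1 then
          (1 : ℝ) / ((i + 1).factorial * (d + 1 - i).factorial) else 0)) *
          Polynomial.X ^ i) = 0 ∨
      ∀ z : ℂ, Polynomial.aeval z (∑ i ∈ Finset.range (f.natDegree + 1),
        Polynomial.C (f.coeff i * (if i ≤ d + 1 then
          (1 : ℝ) / ((i + 1).factorial * (d + 1 - i).factorial) else 0)) *
          Polynomial.X ^ i) = 0 → z.im = 0 :=
  gamma_multiplier_sequence_general d f hf
end

section
/- For every positive integer d, the polynomial h_d(t) = \sum_{i \ge 0} \binom{d-i-1}{i} t^i has only real roots. -/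
/-!
`h_d` is the Fibonacci polynomial `F_{d-1}`, with `F_{n+2} = F_{n+1} + X F_n`. Writing a root as
`z = -αβ` with `α + β = 1`, Binet's formula `(α - β) F_n(-αβ) = α^(n+1) - β^(n+1)` turns
`F_{d-1}(z) = 0` into `α^d = β^d`. Then `|α| = |1 - α|`, so `Re α = 1/2`, `β = conj α` and
`z = -|α|^2` is real.
-/

open Polynomial Finset

theorem Nat.choose_succ_sub_succ (n i : ℕ) :
    (n + 1 - i).choose (i + 1) = (n - i).choose (i + 1) + (n - i).choose i := by
  rcases le_or_gt i n with h | h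
  · rw [Nat.succ_sub h, Nat.choose_succ_succ', add_comm]
  · rw [Nat.sub_eq_zero_of_le h.le, Nat.sub_eq_zero_of_le h, Nat.choose_zero_succ,
      Nat.choose_eq_zero_of_lt (by omega : 0 < i)]

namespace Polynomial

section CommSemiring

variable (R : Type*) [CommSemiring R]

noncomputable def fibPoly (n : ℕ) : R[X] :=
  ∑ i ∈ range (n + 1), C ((n - i).choose i : R) * X ^ i

variable {R}

theorem fibPoly_eq_sum_range {n m : ℕ} (h : n ≤ m) :
    fibPoly R n = ∑ i ∈ range (m + 1), C ((n - i).choose i : R) * X ^ i := by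
  refine sum_subset (range_subset_range.2 (by omega)) fun i _ hi => ?_
  rw [mem_range, not_lt] at hi
  rw [Nat.sub_eq_zero_of_le (by omega), Nat.choose_eq_zero_of_lt (by omega), Nat.cast_zero,
    C_0, zero_mul]

theorem coeff_fibPoly (n i : ℕ) : (fibPoly R n).coeff i = (n - i).choose i := by
  rw [fibPoly_eq_sum_range (le_max_left n i), finsetSum_coeff]
  simp only [coeff_C_mul_X_pow]
  rw [sum_ite_eq, if_pos (mem_range.2 (by omega))]

theorem fibPoly_zero : fibPoly R 0 = 1 := by
  simp [fibPoly]

theorem fibPoly_one : fibPoly R 1 = 1 := by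
  simp [fibPoly, sum_range_succ]

theorem fibPoly_add_two (n : ℕ) : fibPoly R (n + 2) = fibPoly R (n + 1) + X * fibPoly R n := by
  ext (_ | i)
  · simp [coeff_fibPoly]
  · rw [coeff_add, coeff_X_mul, coeff_fibPoly, coeff_fibPoly, coeff_fibPoly,
      show n + 2 - (i + 1) = n + 1 - i by omega, show n + 1 - (i + 1) = n - i by omega,
      Nat.choose_succ_sub_succ, Nat.cast_add]

end CommSemiring

theorem sub_mul_eval_fibPoly {R : Type*} [CommRing R] {α β : R} (hsum : α + β = 1) (n : ℕ) :
    (α - β) * (fibPoly R n).eval (-(α * β)) = α ^ (n + 1) - β ^ (n + 1) := by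
  induction n using Nat.twoStepInduction with
  | zero => simp [fibPoly_zero]
  | one => simp only [fibPoly_one, eval_one]; linear_combination (β - α) * hsum
  | more n ih₀ ih₁ =>
    rw [fibPoly_add_two, eval_add, eval_mul, eval_X, mul_add, ih₁,
      mul_left_comm, ih₀]
    linear_combination (β ^ (n + 2) - α ^ (n + 2)) * hsum

end Polynomial

theorem Complex.mul_im_eq_zero_of_add_eq_one_of_pow_eq_pow {α β : ℂ} {n : ℕ}
    (hsum : α + β = 1) (hpow : α ^ n = β ^ n) (hn : n ≠ 0) : (α * β).im = 0 := by
  have hnorm : ‖α‖ = ‖β‖ :=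
    (pow_left_inj₀ (norm_nonneg _) (norm_nonneg _) hn).1 (by rw [← norm_pow, ← norm_pow, hpow])
  obtain rfl : β = 1 - α := eq_sub_of_add_eq' hsum
  have hre : 2 * α.re = 1 := by
    have := congrArg (· ^ 2) hnorm
    simp only [Complex.sq_norm, Complex.normSq_apply, Complex.sub_re, Complex.sub_im,
      Complex.one_re, Complex.one_im] at this
    linarith
  rw [Complex.mul_im, Complex.sub_re, Complex.sub_im, Complex.one_re, Complex.one_im]
  linear_combination -α.im * hre

/-- For every positive integer `d`, the polynomial
`h_d(t) = ∑_{i ≥ 0} C(d-i-1, i) t^i` has only real roots. -/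
theorem h_d_real_rooted (d : ℕ) (hd : 0 < d) (z : ℂ)
    (hz : Polynomial.eval z (∑ i ∈ Finset.range (d + 1),
      Polynomial.C (((d - i - 1).choose i : ℂ)) * Polynomial.X ^ i) = 0) :
    z.im = 0 := by
  have hroot : (fibPoly ℂ (d - 1)).eval z = 0 := by
    simpa only [fibPoly_eq_sum_range (Nat.sub_le d 1), Nat.sub_right_comm d 1] using hz
  obtain ⟨w, hw⟩ := IsAlgClosed.exists_pow_nat_eq (1 + 4 * z) two_pos
  set α : ℂ := (1 + w) / 2
  set β : ℂ := (1 - w) / 2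
  have hsum : α + β = 1 := by ring
  have hprod : z = -(α * β) := by linear_combination -hw / 4
  have hpow : α ^ d = β ^ d := by
    have := sub_mul_eval_fibPoly hsum (d - 1)
    rw [← hprod, hroot, mul_zero, Nat.sub_add_cancel hd] at this
    exact sub_eq_zero.1 this.symm
  rw [hprod, Complex.neg_im, Complex.mul_im_eq_zero_of_add_eq_one_of_pow_eq_pow hsum hpow hd.ne',
    neg_zero]
end
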